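/- Let X be a semi-inner product C*-module over a C*-algebra A, x₀, y₀ ∈ X, (α₁,…,αₙ) ∈ ℂⁿ, (r₁,…,rₙ) a probability vector, p ∈ A, and f = (f₁,…,fₙ) : A → Xⁿ Fréchet differentiable at p with ‖Df(p) − \widehat{(x₀+y₀)/2}‖ ≤ ‖(x₀−y₀)/2‖. Then for all a ∈ A: ‖Σᵢ rᵢαᵢDfᵢ(p)(a) − (Σᵢ rᵢαᵢ)(Σᵢ rᵢDfᵢ(p)(a))‖ ≤ ‖a‖ · ‖(x₀−y₀)/2‖ · (Σᵢ rᵢ|αᵢ|² − |Σᵢ rᵢαᵢ|²)^{1/2}. -/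

import Mathlib

/-!
Write `Dfᵢ(p)(a) = c + wᵢ` with `c = ((x₀ + y₀)/2)·a`. The constant `c` cancels from the
Grüss expression, which becomes `∑ rᵢ (αᵢ - s) wᵢ` with `s = ∑ rᵢ αᵢ`. The hypothesis on `Df(p)`
bounds `⟨wᵢ, wᵢ⟩ ≤ ∑ⱼ ⟨wⱼ, wⱼ⟩` and hence, by monotonicity of the norm on positive elements
of `A`, `‖wᵢ‖ ≤ ‖(x₀ - y₀)/2‖ ‖a‖`. Cauchy–Schwarz with weights `rᵢ` then bounds
`∑ rᵢ |αᵢ - s|` by the square root of the variance `∑ rᵢ |αᵢ|² - |s|²`.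
-/

open Finset

section CStarRing

variable {A : Type*} [NormedRing A] [StarRing A] [CStarRing A] [NormedAlgebra ℂ A]

theorem star_algebraMap_ofReal (r : ℝ) : star (algebraMap ℂ A r) = algebraMap ℂ A r := by
  have h := map_real_smul (starAddEquiv (R := A)) continuous_star r 1
  simpa [Algebra.algebraMap_eq_smul_one, Complex.coe_smul] using h

variable [PartialOrder A] [StarOrderedRing A]

/- The C⋆-identity alone does not force this (`ℂ` with the trivial involution is a `CStarRing`);
the order does. -/
theorem star_algebraMap_I : star (algebraMap ℂ A Complex.I) = -algebraMap ℂ A Complex.I := by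
  set v := algebraMap ℂ A Complex.I
  have hv : v * v = -1 := by rw [← map_mul, Complex.I_mul_I, map_neg, map_one]
  have hsv : star v * star v = -1 := by rw [← star_mul, hv, star_neg, star_one]
  have hcomm : v * star v = star v * v := Algebra.commutes Complex.I (star v)
  set z := v + star v
  set p := 1 - star v * v
  have hz : star z = z := by simp [z, add_comm]
  have hp : star p = p := by simp [p]
  -- `z * z = -(p * p)` with both sides positive, so `z * z = 0`.
  have hsum : z * z + p * p = 0 := by
    have h4 : star v * v * (star v * v) = 1 := by
      rw [mul_assoc, ← mul_assoc v, hcomm, ← mul_assoc, ← mul_assoc, hsv, mul_assoc, hv]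
      simp
    calc z * z + p * p = (v * v + 1) + (star v * star v + 1) + (v * star v - star v * v)
          + (star v * v * (star v * v) - 1) := by simp only [z, p]; noncomm_ring
      _ = 0 := by rw [hv, hsv, hcomm, h4]; simp
  have hzz : z * z = 0 := by
    have h1 : 0 ≤ star z * z := star_mul_self_nonneg z
    have h2 : 0 ≤ star p * p := star_mul_self_nonneg p
    rw [hz] at h1
    rw [hp] at h2
    exact le_antisymm (by rw [eq_neg_of_add_eq_zero_left hsum]; exact neg_nonpos.mpr h2) h1
  have : z = 0 := (CStarRing.star_mul_self_eq_zero_iff z).mp (by rwa [hz])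
  exact eq_neg_of_add_eq_zero_right this

theorem star_algebraMap_complex (c : ℂ) : star (algebraMap ℂ A c) = algebraMap ℂ A (star c) := by
  conv_lhs => rw [← Complex.re_add_im c]
  rw [map_add, map_mul, star_add, star_mul, star_algebraMap_I, star_algebraMap_ofReal,
    star_algebraMap_ofReal, ← Algebra.commutes, ← map_neg, ← map_mul, ← map_add]
  congr 1
  simp [Complex.ext_iff]

theorem CStarRing.starModule_complex : StarModule ℂ A :=
  ⟨fun c a => by
    rw [Algebra.smul_def, star_mul, star_algebraMap_complex, Algebra.smul_def, Algebra.commutes]⟩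

theorem CStarRing.norm_le_norm_of_nonneg_of_le [CompleteSpace A] {a b : A} (ha : 0 ≤ a)
    (hab : a ≤ b) : ‖a‖ ≤ ‖b‖ :=
  letI : StarModule ℂ A := CStarRing.starModule_complex
  letI : CStarAlgebra A := {}
  CStarAlgebra.norm_le_norm_of_nonneg_of_le ha hab

end CStarRing

section Gruss

variable {ι : Type*} [Fintype ι] {r : ι → ℝ}

theorem sum_mul_norm_sub_sum_smul_sq {E : Type*} [NormedAddCommGroup E] [InnerProductSpace ℝ E]
    (hr1 : ∑ i, r i = 1) (x : ι → E) :
    ∑ i, r i * ‖x i - ∑ j, r j • x j‖ ^ 2 = ∑ i, r i * ‖x i‖ ^ 2 - ‖∑ j, r j • x j‖ ^ 2 := by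
  set s := ∑ j, r j • x j
  have hinner : ∑ i, r i * inner ℝ (x i) s = ‖s‖ ^ 2 := by
    simp only [← real_inner_smul_left, ← sum_inner, s, real_inner_self_eq_norm_sq]
  simp only [norm_sub_sq_real, mul_sub, mul_add, sum_add_distrib, sum_sub_distrib, ← sum_mul, hr1,
    mul_left_comm _ (2 : ℝ), ← mul_sum, hinner]
  ring

theorem sum_mul_le_sqrt_sum_mul_sq (hr : ∀ i, 0 ≤ r i) (hr1 : ∑ i, r i = 1) (t : ι → ℝ) :
    ∑ i, r i * t i ≤ √(∑ i, r i * t i ^ 2) := by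
  refine Real.le_sqrt_of_sq_le ?_
  simpa [hr1] using sum_sq_le_sum_mul_sum_of_sq_le_mul univ (fun i _ => hr i)
    (fun i _ => mul_nonneg (hr i) (sq_nonneg (t i))) (fun i _ => le_of_eq (by ring))

variable {X : Type*} [NormedAddCommGroup X] [NormedSpace ℂ X]

theorem sum_smul_sub_eq_sum_smul_sub_center (hr1 : ∑ i, r i = 1) (α : ι → ℂ) (y : ι → X)
    (v : X) :
    ∑ i, ((r i : ℂ) * α i) • y i - (∑ i, (r i : ℂ) * α i) • ∑ i, r i • y i
      = ∑ i, ((r i : ℂ) * (α i - ∑ j, (r j : ℂ) * α j)) • (y i - v) := by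
  set s := ∑ j, (r j : ℂ) * α j
  have hc : ∑ i, (r i : ℂ) * (α i - s) = 0 := by
    simp_rw [mul_sub, sum_sub_distrib, ← sum_mul, ← Complex.ofReal_sum, hr1]
    simp [s]
  simp_rw [smul_sub, sum_sub_distrib, ← sum_smul, hc, zero_smul, sub_zero, mul_sub, sub_smul,
    sum_sub_distrib, smul_sum, ← Complex.coe_smul, smul_smul, mul_comm s]

theorem norm_sum_smul_sub_smul_sum_le (hr : ∀ i, 0 ≤ r i) (hr1 : ∑ i, r i = 1) (α : ι → ℂ)
    (y : ι → X) (v : X) {K : ℝ} (hK : ∀ i, ‖y i - v‖ ≤ K) :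
    ‖∑ i, ((r i : ℂ) * α i) • y i - (∑ i, (r i : ℂ) * α i) • ∑ i, r i • y i‖
      ≤ K * √(∑ i, r i * ‖α i‖ ^ 2 - ‖∑ i, (r i : ℂ) * α i‖ ^ 2) := by
  set s := ∑ j, (r j : ℂ) * α j
  have hs : s = ∑ j, r j • α j := by simp only [s, Complex.real_smul]
  obtain ⟨i₀, -⟩ := exists_ne_zero_of_sum_ne_zero (hr1.trans_ne one_ne_zero)
  have hK0 : 0 ≤ K := (norm_nonneg _).trans (hK i₀)
  rw [sum_smul_sub_eq_sum_smul_sub_center hr1 α y v]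
  calc ‖∑ i, ((r i : ℂ) * (α i - s)) • (y i - v)‖
      ≤ ∑ i, r i * ‖α i - s‖ * K := by
        refine (norm_sum_le _ _).trans (sum_le_sum fun i _ => ?_)
        rw [norm_smul, norm_mul, Complex.norm_real, Real.norm_of_nonneg (hr i)]
        exact mul_le_mul_of_nonneg_left (hK i) (mul_nonneg (hr i) (norm_nonneg _))
    _ ≤ K * √(∑ i, r i * ‖α i - s‖ ^ 2) := by
        rw [← sum_mul, mul_comm]
        exact mul_le_mul_of_nonneg_left (sum_mul_le_sqrt_sum_mul_sq hr hr1 _) hK0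
    _ = K * √(∑ i, r i * ‖α i‖ ^ 2 - ‖s‖ ^ 2) := by
        rw [hs, sum_mul_norm_sub_sum_smul_sq hr1]

end Gruss

theorem norm_le_sqrt_norm_sum_ip {A : Type*} [NormedRing A] [StarRing A] [CStarRing A]
    [PartialOrder A] [StarOrderedRing A] [NormedAlgebra ℂ A] [CompleteSpace A]
    {X : Type*} [NormedAddCommGroup X] (ip : X → X → A) (h_pos : ∀ x : X, 0 ≤ ip x x)
    (h_norm : ∀ x : X, ‖x‖ = √‖ip x x‖) {ι : Type*} [Fintype ι] (w : ι → X) (i : ι) :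
    ‖w i‖ ≤ √‖∑ j, ip (w j) (w j)‖ := by
  rw [h_norm]
  exact Real.sqrt_le_sqrt <| CStarRing.norm_le_norm_of_nonneg_of_le (h_pos _) <|
    single_le_sum (fun j _ => h_pos (w j)) (mem_univ i)

theorem stmt_9_general {A : Type*} [NormedRing A] [StarRing A] [CStarRing A] [PartialOrder A]
    [StarOrderedRing A] [NormedAlgebra ℂ A] [CompleteSpace A]
    {X : Type*} [NormedAddCommGroup X] [NormedSpace ℂ X]
    (smul : X → A → X)
    (ip : X → X → A)
    (h_pos : ∀ x : X, 0 ≤ ip x x)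
    (h_norm : ∀ x : X, ‖x‖ = Real.sqrt ‖ip x x‖)
    (x₀ y₀ : X) (n : ℕ) (α : Fin n → ℂ)
    (r : Fin n → ℝ) (hr : ∀ i, 0 ≤ r i) (hr1 : ∑ i, r i = 1)
    (f' : Fin n → A →L[ℝ] X)
    (hfop : ∀ b : A,
      Real.sqrt ‖∑ i, ip (f' i b - smul ((2⁻¹ : ℝ) • (x₀ + y₀)) b)
                       (f' i b - smul ((2⁻¹ : ℝ) • (x₀ + y₀)) b)‖
        ≤ ‖(2⁻¹ : ℝ) • (x₀ - y₀)‖ * ‖b‖) :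
    ∀ a : A,
      ‖(∑ i, ((r i : ℂ) * α i) • (f' i a))
          - (∑ i, (r i : ℂ) * α i) • ∑ i, r i • (f' i a)‖
        ≤ ‖a‖ * ‖(2⁻¹ : ℝ) • (x₀ - y₀)‖ *
            Real.sqrt ((∑ i, r i * ‖α i‖ ^ 2)
              - ‖∑ i, (r i : ℂ) * α i‖ ^ 2) := by
  intro a
  rw [mul_comm ‖a‖]
  refine norm_sum_smul_sub_smul_sum_le hr hr1 α (fun i => f' i a)
    (smul ((2⁻¹ : ℝ) • (x₀ + y₀)) a) fun i => ?_
  exact (norm_le_sqrt_norm_sum_ip ip h_pos h_norm _ i).trans (hfop a)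

/-- Weighted Grüss type inequality: if ‖Df(p) − \hat{(x₀+y₀)/2}‖ ≤ ‖(x₀−y₀)/2‖ then
‖Σᵢ rᵢαᵢDfᵢ(p)(a) − (Σᵢ rᵢαᵢ)(Σᵢ rᵢDfᵢ(p)(a))‖
  ≤ ‖a‖·‖(x₀−y₀)/2‖·(Σᵢ rᵢ|αᵢ|² − |Σᵢ rᵢαᵢ|²)^{1/2}. -/
theorem stmt_9 {A : Type*} [NormedRing A] [StarRing A] [CStarRing A] [PartialOrder A]
    [StarOrderedRing A] [NormedAlgebra ℂ A] [CompleteSpace A]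
    {X : Type*} [NormedAddCommGroup X] [NormedSpace ℂ X]
    (smul : X → A → X)
    (ip : X → X → A)
    (h_add : ∀ x y z : X, ip x (y + z) = ip x y + ip x z)
    (h_add' : ∀ x y z : X, ip (x + y) z = ip x z + ip y z)
    (h_smul : ∀ (x y : X) (a : A), ip x (smul y a) = ip x y * a)
    (h_csmul : ∀ (c : ℂ) (x y : X), ip x (c • y) = c • ip x y)
    (h_star : ∀ x y : X, star (ip x y) = ip y x)
    (h_pos : ∀ x : X, 0 ≤ ip x x)
    (h_norm : ∀ x : X, ‖x‖ = Real.sqrt ‖ip x x‖)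
    (x₀ y₀ : X) (n : ℕ) (α : Fin n → ℂ)
    (r : Fin n → ℝ) (hr : ∀ i, 0 ≤ r i) (hr1 : ∑ i, r i = 1)
    (f : Fin n → A → X) (f' : Fin n → A →L[ℝ] X) (p : A)
    (hf : ∀ i, HasFDerivAt (f i) (f' i) p)
    (hfop : ∀ b : A,
      Real.sqrt ‖∑ i, ip (f' i b - smul ((2⁻¹ : ℝ) • (x₀ + y₀)) b)
                       (f' i b - smul ((2⁻¹ : ℝ) • (x₀ + y₀)) b)‖
        ≤ ‖(2⁻¹ : ℝ) • (x₀ - y₀)‖ * ‖b‖) :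
    ∀ a : A,
      ‖(∑ i, ((r i : ℂ) * α i) • (f' i a))
          - (∑ i, (r i : ℂ) * α i) • ∑ i, r i • (f' i a)‖
        ≤ ‖a‖ * ‖(2⁻¹ : ℝ) • (x₀ - y₀)‖ *
            Real.sqrt ((∑ i, r i * ‖α i‖ ^ 2)
              - ‖∑ i, (r i : ℂ) * α i‖ ^ 2) :=
  stmt_9_general smul ip h_pos h_norm x₀ y₀ n α r hr hr1 f' hfop
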